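/- For the uniform distribution over m ≥ 2 outcomes, the expected InfoNCE loss cannot be less than log m minus the mutual information between the positive-pair variables: E[L_con] ≥ log m − I(Z¹; Z²). -/

import Mathlib

/-!
Let `w` be the law of a batch (positive pair from `p`, negatives i.i.d. from the second marginal)
and `G` the law of `a`, `b`, `ys` drawn independently from the marginals, reweighted by `m` times
the critic's softmax probability of the positive. Then `E[L_con] + I(Z¹; Z²) - log m` is exactly
`∑ w log (w / G)`. Since `b` is exchangeable with the negatives under the independent law, the
softmax probability of the positive has mean `1 / m`, so `G` has total mass `1` and Gibbs'
inequality makes the sum nonnegative.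
-/

open scoped BigOperators

/-- marginal of the first coordinate -/
noncomputable def margX {α β : Type*} [Fintype α] [Fintype β] (p : α × β → ℝ) (a : α) : ℝ :=
  ∑ b, p (a, b)

/-- marginal of the second coordinate -/
noncomputable def margY {α β : Type*} [Fintype α] [Fintype β] (p : α × β → ℝ) (b : β) : ℝ :=
  ∑ a, p (a, b)

/-- mutual information of a finite joint distribution -/
noncomputable def mutualInfo {α β : Type*} [Fintype α] [Fintype β] (p : α × β → ℝ) : ℝ :=
  ∑ a, ∑ b, p (a, b) * Real.log (p (a, b) / (margX p a * margY p b))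

/-- Expected InfoNCE loss with `m` candidates: one positive pair `(a, b)` drawn from the
joint `p`, and `m − 1` negatives drawn independently from the marginal of `Z²`, with
critic `h`. -/
noncomputable def expectedInfoNCE {α β : Type*} [Fintype α] [Fintype β]
    (p : α × β → ℝ) (h : α → β → ℝ) (m : ℕ) : ℝ :=
  ∑ a, ∑ b, ∑ ys : Fin (m - 1) → β,
    p (a, b) * (∏ k, margY p (ys k)) *
      (-Real.log (Real.exp (h a b) / (Real.exp (h a b) + ∑ k, Real.exp (h a (ys k)))))

open Finset Real

lemma sub_le_mul_log_div {w g : ℝ} (hw : 0 ≤ w) (hg : 0 ≤ g) (hwg : 0 < w → 0 < g) :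
    w - g ≤ w * log (w / g) := by
  rcases hw.eq_or_lt with rfl | hw
  · simpa using hg
  have hg := hwg hw
  have key := mul_le_mul_of_nonneg_left (self_sub_one_le_mul_log (div_pos hw hg).le) hg.le
  rwa [mul_sub, mul_div_cancel₀ _ hg.ne', mul_one, ← mul_assoc, mul_div_cancel₀ _ hg.ne'] at key

section Exchangeability

variable {ι β : Type*} [Fintype ι] [DecidableEq ι] [Fintype β] {q : β → ℝ}

lemma sum_pi_prod_eq_one (hq : ∑ b, q b = 1) : ∑ y : ι → β, ∏ i, q (y i) = 1 := by
  rw [← Fintype.prod_sum (fun _ : ι ↦ q)]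
  simp [hq]

/-- The coordinates of an i.i.d. tuple are exchangeable, so all have the same expected share,
and the shares add up to `1`. -/
lemma sum_pi_prod_mul_div_sum_eq_inv_card (hq : ∑ b, q b = 1) {f : β → ℝ} (hf : ∀ b, 0 < f b)
    (i : ι) :
    ∑ y : ι → β, (∏ k, q (y k)) * (f (y i) / ∑ k, f (y k)) = (Fintype.card ι : ℝ)⁻¹ := by
  set share : ι → ℝ := fun j ↦ ∑ y : ι → β, (∏ k, q (y k)) * (f (y j) / ∑ k, f (y k))
  have share_eq (j : ι) : share j = share i :=
    Fintype.sum_equiv ((Equiv.swap i j).arrowCongr (Equiv.refl β)) _ _ fun y ↦ by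
      simp [Equiv.prod_comp (Equiv.swap i j) (fun k ↦ q (y k)),
        Equiv.sum_comp (Equiv.swap i j) (fun k ↦ f (y k))]
  have sum_share : ∑ j, share j = 1 := by
    rw [Finset.sum_comm, ← sum_pi_prod_eq_one (ι := ι) hq]
    refine sum_congr rfl fun y _ ↦ ?_
    have hpos : 0 < ∑ k, f (y k) := sum_pos (fun k _ ↦ hf (y k)) ⟨i, mem_univ i⟩
    rw [← mul_sum, ← sum_div, div_self hpos.ne', mul_one]
  rw [Fintype.sum_congr _ _ share_eq, sum_const, card_univ, nsmul_eq_mul] at sum_share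
  exact eq_inv_of_mul_eq_one_right sum_share

lemma sum_sum_pi_mul_prod_mul_div_add_sum (hq : ∑ b, q b = 1) {f : β → ℝ} (hf : ∀ b, 0 < f b)
    (n : ℕ) :
    ∑ b, ∑ ys : Fin n → β, q b * (∏ k, q (ys k)) * (f b / (f b + ∑ k, f (ys k))) =
      ((n : ℝ) + 1)⁻¹ := by
  have := sum_pi_prod_mul_div_sum_eq_inv_card hq hf (0 : Fin (n + 1))
  rw [Fintype.card_fin, Nat.cast_succ, ← Equiv.sum_comp (Fin.consEquiv fun _ ↦ β),
    Fintype.sum_prod_type] at this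
  simpa [Fin.consEquiv, Fin.prod_univ_succ, Fin.sum_univ_succ] using this

end Exchangeability

section InfoNCE

variable {α β : Type*}

noncomputable def positiveShare (h : α → β → ℝ) (n : ℕ) (a : α) (b : β) (ys : Fin n → β) : ℝ :=
  exp (h a b) / (exp (h a b) + ∑ k, exp (h a (ys k)))

lemma positiveShare_pos (h : α → β → ℝ) {n : ℕ} (a : α) (b : β) (ys : Fin n → β) :
    0 < positiveShare h n a b ys := by
  unfold positiveShare; positivity

variable [Fintype α] [Fintype β] {p : α × β → ℝ}

lemma sum_margX_eq_one (hsum : ∑ ab : α × β, p ab = 1) : ∑ a, margX p a = 1 := by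
  unfold margX; rwa [← Fintype.sum_prod_type']

lemma sum_margY_eq_one (hsum : ∑ ab : α × β, p ab = 1) : ∑ b, margY p b = 1 := by
  unfold margY; rwa [sum_comm, ← Fintype.sum_prod_type']

lemma le_margX (hp : ∀ ab, 0 ≤ p ab) (a : α) (b : β) : p (a, b) ≤ margX p a :=
  single_le_sum (fun b' _ ↦ hp (a, b')) (mem_univ b)

lemma le_margY (hp : ∀ ab, 0 ≤ p ab) (a : α) (b : β) : p (a, b) ≤ margY p b :=
  single_le_sum (fun a' _ ↦ hp (a', b)) (mem_univ a)

lemma margX_nonneg (hp : ∀ ab, 0 ≤ p ab) (a : α) : 0 ≤ margX p a :=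
  sum_nonneg fun b _ ↦ hp (a, b)

lemma margY_nonneg (hp : ∀ ab, 0 ≤ p ab) (b : β) : 0 ≤ margY p b :=
  sum_nonneg fun a _ ↦ hp (a, b)

variable (p) (h : α → β → ℝ) (n : ℕ)

noncomputable def batchLaw (a : α) (b : β) (ys : Fin n → β) : ℝ :=
  p (a, b) * ∏ k, margY p (ys k)

noncomputable def criticLaw (a : α) (b : β) (ys : Fin n → β) : ℝ :=
  (n + 1) * margX p a * (margY p b * (∏ k, margY p (ys k)) * positiveShare h n a b ys)

lemma expectedInfoNCE_succ :
    expectedInfoNCE p h (n + 1) =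
      ∑ a, ∑ b, ∑ ys, batchLaw p n a b ys * -log (positiveShare h n a b ys) :=
  rfl

variable {p h n}

lemma batchLaw_nonneg (hp : ∀ ab, 0 ≤ p ab) (a : α) (b : β) (ys : Fin n → β) :
    0 ≤ batchLaw p n a b ys :=
  mul_nonneg (hp _) (prod_nonneg fun k _ ↦ margY_nonneg hp (ys k))

lemma criticLaw_nonneg (hp : ∀ ab, 0 ≤ p ab) (a : α) (b : β) (ys : Fin n → β) :
    0 ≤ criticLaw p h n a b ys := by
  have := prod_nonneg fun k (_ : k ∈ univ) ↦ margY_nonneg hp (ys k)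
  have := margX_nonneg hp a
  have := margY_nonneg hp b
  have := positiveShare_pos h a b ys
  unfold criticLaw; positivity

lemma sum_batchLaw_mul (hsum : ∑ ab : α × β, p ab = 1) (a : α) (b : β) (c : ℝ) :
    ∑ ys, batchLaw p n a b ys * c = p (a, b) * c := by
  calc ∑ ys, batchLaw p n a b ys * c
        = p (a, b) * (∑ ys : Fin n → β, ∏ k, margY p (ys k)) * c := by
          simp only [batchLaw, mul_sum, sum_mul]
    _ = p (a, b) * c := by rw [sum_pi_prod_eq_one (sum_margY_eq_one hsum), mul_one]

lemma sum_batchLaw (hsum : ∑ ab : α × β, p ab = 1) :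
    ∑ a, ∑ b, ∑ ys, batchLaw p n a b ys = 1 := by
  have marginal (a : α) (b : β) := sum_batchLaw_mul (n := n) hsum a b 1
  simp only [mul_one] at marginal
  simp only [marginal]
  rwa [← Fintype.sum_prod_type']

lemma sum_criticLaw (hsum : ∑ ab : α × β, p ab = 1) :
    ∑ a, ∑ b, ∑ ys, criticLaw p h n a b ys = 1 := by
  have share (a : α) := sum_sum_pi_mul_prod_mul_div_add_sum (sum_margY_eq_one hsum)
    (fun b ↦ exp_pos (h a b)) n
  simp only [criticLaw, ← mul_sum, positiveShare, share]
  calc ∑ a, (n + 1) * margX p a * ((n : ℝ) + 1)⁻¹ = ∑ a, margX p a :=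
        sum_congr rfl fun a _ ↦ by field_simp
    _ = 1 := sum_margX_eq_one hsum

lemma pos_of_batchLaw_pos (hp : ∀ ab, 0 ≤ p ab) {a : α} {b : β} {ys : Fin n → β}
    (hw : 0 < batchLaw p n a b ys) :
    0 < p (a, b) ∧ 0 < margX p a ∧ 0 < margY p b ∧ 0 < ∏ k, margY p (ys k) := by
  have hprod := pos_of_mul_pos_right hw (hp _)
  have hpab := pos_of_mul_pos_left hw hprod.le
  exact ⟨hpab, hpab.trans_le (le_margX hp a b), hpab.trans_le (le_margY hp a b), hprod⟩

lemma criticLaw_pos_of_batchLaw_pos (hp : ∀ ab, 0 ≤ p ab) {a : α} {b : β} {ys : Fin n → β}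
    (hw : 0 < batchLaw p n a b ys) : 0 < criticLaw p h n a b ys := by
  obtain ⟨-, hx, hy, hprod⟩ := pos_of_batchLaw_pos hp hw
  have := positiveShare_pos h a b ys
  unfold criticLaw; positivity

lemma batchLaw_mul_log_div_criticLaw (hp : ∀ ab, 0 ≤ p ab) (a : α) (b : β) (ys : Fin n → β) :
    batchLaw p n a b ys * log (batchLaw p n a b ys / criticLaw p h n a b ys) =
      batchLaw p n a b ys * (-log (positiveShare h n a b ys) +
        log (p (a, b) / (margX p a * margY p b)) - log (n + 1)) := by
  rcases (batchLaw_nonneg hp a b ys).eq_or_lt with hw | hw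
  · rw [← hw, zero_mul, zero_mul]
  obtain ⟨hpab, hx, hy, hprod⟩ := pos_of_batchLaw_pos hp hw
  have hs := positiveShare_pos h a b ys
  have ratio : batchLaw p n a b ys / criticLaw p h n a b ys =
      p (a, b) / (margX p a * margY p b) / ((n + 1) * positiveShare h n a b ys) := by
    unfold batchLaw criticLaw; field_simp
  rw [ratio, log_div (by positivity) (by positivity), log_mul (by positivity) hs.ne']
  ring

lemma sum_batchLaw_mul_log_div_criticLaw (hp : ∀ ab, 0 ≤ p ab) (hsum : ∑ ab : α × β, p ab = 1) :
    ∑ a, ∑ b, ∑ ys, batchLaw p n a b ys * log (batchLaw p n a b ys / criticLaw p h n a b ys) =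
      expectedInfoNCE p h (n + 1) + mutualInfo p - log (n + 1) := by
  simp only [batchLaw_mul_log_div_criticLaw hp, mul_sub, mul_add, sum_add_distrib,
    sum_sub_distrib, sum_batchLaw_mul hsum]
  have total : ∑ a, ∑ b, p (a, b) * log (n + 1) = log (n + 1) := by
    simp only [← sum_mul, ← Fintype.sum_prod_type', hsum, one_mul]
  rw [expectedInfoNCE_succ, mutualInfo, total]

end InfoNCE

/-- InfoNCE bound: the expected contrastive loss with `m ≥ 2` candidates
satisfies `E[L_con] ≥ log m − I(Z¹; Z²)`. -/
theorem expected_infoNCE_lower_bound {α β : Type*} [Fintype α] [Fintype β]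
    (p : α × β → ℝ) (hp : ∀ ab, 0 ≤ p ab) (hsum : ∑ ab : α × β, p ab = 1)
    (h : α → β → ℝ) (m : ℕ) (hm : 2 ≤ m) :
    expectedInfoNCE p h m ≥ Real.log m - mutualInfo p := by
  obtain ⟨n, rfl⟩ : ∃ n, m = n + 1 := ⟨m - 1, by omega⟩
  have gibbs : ∑ a, ∑ b, ∑ ys, (batchLaw p n a b ys - criticLaw p h n a b ys) ≤
      ∑ a, ∑ b, ∑ ys, batchLaw p n a b ys * log (batchLaw p n a b ys / criticLaw p h n a b ys) :=
    sum_le_sum fun a _ ↦ sum_le_sum fun b _ ↦ sum_le_sum fun ys _ ↦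
      sub_le_mul_log_div (batchLaw_nonneg hp a b ys) (criticLaw_nonneg hp a b ys)
        (criticLaw_pos_of_batchLaw_pos hp)
  rw [sum_batchLaw_mul_log_div_criticLaw hp hsum] at gibbs
  simp only [sum_sub_distrib, sum_batchLaw hsum, sum_criticLaw hsum, sub_self] at gibbs
  push_cast
  linarith
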